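/- Let α ∈ (0,1). There exists a constant k ≥ 1, depending only on α, such that for every integer x ≥ 1: (1/k) · x^{1-α} · exp(-x^α) ≤ ∑_{y=x}^{∞} exp(-y^α) ≤ k · x^{1-α} · exp(-x^α), where the sum runs over all integers y ≥ x (and is convergent). -/

import Mathlib

/-
By concavity of `t ↦ t ^ α`, the increment `(x + j) ^ α - x ^ α` lies between
`α j (x + j) ^ (α - 1)` and `α j x ^ (α - 1)`. The second bound makes each of the first
`⌈x ^ (1 - α)⌉` terms of the tail at least `e⁻² e^{-x ^ α}`. The first one, with
`x + j ≤ 2 max x j`, dominates the tail by `e^{-x ^ α}` times the sum of a geometric series of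
ratio `exp (-α (2x) ^ (α - 1))`, which is `O(x ^ (1 - α) / α)`, and of the series
`∑ exp (-α 2 ^ (α - 1) j ^ α)`, which depends only on `α`.
-/

open Real Filter

theorem Real.rpow_le_rpow_add_mul_rpow_sub_one {α a b : ℝ} (hα0 : 0 ≤ α) (hα1 : α ≤ 1)
    (ha : 0 < a) (hb : 0 ≤ b) : b ^ α ≤ a ^ α + α * (b - a) * a ^ (α - 1) := by
  have hs : -1 ≤ (b - a) / a := by rw [le_div_iff₀ ha]; linarith
  calc b ^ α = a ^ α * (1 + (b - a) / a) ^ α := by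
        rw [← mul_rpow ha.le (by linarith), mul_add, mul_div_cancel₀ _ ha.ne']; ring_nf
    _ ≤ a ^ α * (1 + α * ((b - a) / a)) := by
        gcongr; exact rpow_one_add_le_one_add_mul_self hs hα0 hα1
    _ = a ^ α + α * (b - a) * a ^ (α - 1) := by
        rw [rpow_sub_one ha.ne']; field_simp

theorem Real.summable_exp_neg_mul_rpow {c α : ℝ} (hc : 0 < c) (hα : 0 < α) :
    Summable fun n : ℕ => exp (-(c * (n : ℝ) ^ α)) := by
  have h := (isLittleO_exp_neg_mul_rpow_atTop hc (-2 / α)).comp_tendsto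
    ((tendsto_rpow_atTop hα).comp tendsto_natCast_atTop_atTop)
  refine summable_of_isBigO_nat' (Real.summable_nat_rpow.2 (by norm_num : (-2 : ℝ) < -1)) ?_
  refine h.isBigO.congr' (Eventually.of_forall fun n => by simp) (Eventually.of_forall fun n => ?_)
  simp only [Function.comp_apply]
  rw [← rpow_mul n.cast_nonneg, mul_div_cancel₀ _ hα.ne']

theorem Real.inv_one_sub_exp_neg_le {c : ℝ} (hc : 0 < c) : (1 - exp (-c))⁻¹ ≤ 1 + c⁻¹ := by
  have h : c / (1 + c) ≤ 1 - exp (-c) := by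
    rw [exp_neg, div_le_iff₀ (by positivity)]
    have := add_one_le_exp c
    have := exp_pos c
    field_simp
    nlinarith
  calc (1 - exp (-c))⁻¹ ≤ (c / (1 + c))⁻¹ := inv_anti₀ (by positivity) h
    _ = 1 + c⁻¹ := by field_simp; ring

theorem Real.mul_mul_rpow_sub_one_le_add_rpow_sub_rpow {α x t m : ℝ} (hα0 : 0 ≤ α) (hα1 : α ≤ 1)
    (hx : 0 < x) (ht : 0 ≤ t) (hm : x + t ≤ m) : α * t * m ^ (α - 1) ≤ (x + t) ^ α - x ^ α := by
  have htan := rpow_le_rpow_add_mul_rpow_sub_one hα0 hα1 (by linarith : 0 < x + t) hx.le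
  have hmono : m ^ (α - 1) ≤ (x + t) ^ (α - 1) :=
    rpow_le_rpow_of_nonpos (by linarith) hm (by linarith)
  have : α * t * m ^ (α - 1) ≤ α * t * (x + t) ^ (α - 1) := by gcongr
  linarith

def Nat.addLeftEquivLE (x : ℕ) : ℕ ≃ {y : ℕ // x ≤ y} where
  toFun j := ⟨x + j, Nat.le_add_right x j⟩
  invFun y := y.1 - x
  left_inv j := Nat.add_sub_cancel_left x j
  right_inv y := Subtype.ext (Nat.add_sub_cancel' y.2)

theorem Nat.hasSum_subtype_le_iff {M : Type*} [AddCommMonoid M] [TopologicalSpace M] {f : ℕ → M}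
    {x : ℕ} {s : M} : HasSum (fun y : {y : ℕ // x ≤ y} => f y) s ↔ HasSum (fun j => f (x + j)) s :=
  (Nat.addLeftEquivLE x).hasSum_iff.symm

section TailSum

variable {α x : ℝ}

theorem summable_exp_neg_add_rpow (hα : 0 < α) (hx : 0 ≤ x) :
    Summable fun j : ℕ => exp (-(x + j) ^ α) := by
  refine (summable_exp_neg_mul_rpow one_pos hα).of_nonneg_of_le (fun j => (exp_pos _).le)
    fun j => ?_
  rw [one_mul, exp_le_exp, neg_le_neg_iff]
  gcongr
  linarith

theorem exp_neg_add_rpow_le (hα0 : 0 ≤ α) (hα1 : α ≤ 1) (hx : 0 < x) (j : ℕ) :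
    exp (-(x + j) ^ α) ≤ exp (-x ^ α) *
      (exp (-(α * (2 * x) ^ (α - 1))) ^ j + exp (-(α * 2 ^ (α - 1) * (j : ℝ) ^ α))) := by
  have hj : (0 : ℝ) ≤ j := j.cast_nonneg
  rw [← exp_nat_mul, mul_add, ← exp_add, ← exp_add]
  rcases le_total (j : ℝ) x with hjx | hxj
  · have := mul_mul_rpow_sub_one_le_add_rpow_sub_rpow hα0 hα1 hx hj (by linarith : x + j ≤ 2 * x)
    refine le_add_of_le_of_nonneg (exp_le_exp.2 ?_) (exp_pos _).le
    linarith
  · have := mul_mul_rpow_sub_one_le_add_rpow_sub_rpow hα0 hα1 hx hj (by linarith : x + j ≤ 2 * j)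
    have hpow : α * j * (2 * j) ^ (α - 1) = α * 2 ^ (α - 1) * (j : ℝ) ^ α := by
      have hj0 : (j : ℝ) ≠ 0 := by linarith
      rw [mul_rpow zero_le_two hj, rpow_sub_one hj0]
      field_simp
    refine le_add_of_nonneg_of_le (exp_pos _).le (exp_le_exp.2 ?_)
    linarith

noncomputable def tailConst (α : ℝ) : ℝ :=
  1 + 2 / α + ∑' n : ℕ, exp (-(α * 2 ^ (α - 1) * (n : ℝ) ^ α))

theorem tsum_exp_neg_add_rpow_le (hα0 : 0 < α) (hα1 : α ≤ 1) (hx : 1 ≤ x) :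
    ∑' j : ℕ, exp (-(x + j) ^ α) ≤ tailConst α * x ^ (1 - α) * exp (-x ^ α) := by
  set c := α * (2 * x) ^ (α - 1)
  have hc : 0 < c := by positivity
  have hgeom : Summable fun j : ℕ => exp (-c) ^ j :=
    summable_geometric_of_lt_one (exp_pos _).le (exp_lt_one_iff.2 (by linarith))
  have hS : Summable fun n : ℕ => exp (-(α * 2 ^ (α - 1) * (n : ℝ) ^ α)) :=
    summable_exp_neg_mul_rpow (by positivity) hα0
  have hcinv : c⁻¹ ≤ 2 / α * x ^ (1 - α) := by
    have h2 : (2 : ℝ) ^ (1 - α) ≤ 2 := by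
      simpa using rpow_le_rpow_of_exponent_le one_le_two (by linarith : 1 - α ≤ 1)
    calc c⁻¹ = 2 ^ (1 - α) / α * x ^ (1 - α) := by
          rw [mul_inv, ← rpow_neg (by linarith), neg_sub, mul_rpow zero_le_two (by linarith)]
          ring
      _ ≤ 2 / α * x ^ (1 - α) := by gcongr
  have hx1 : 1 ≤ x ^ (1 - α) := one_le_rpow hx (by linarith)
  calc ∑' j : ℕ, exp (-(x + j) ^ α)
      ≤ ∑' j : ℕ, exp (-x ^ α) * (exp (-c) ^ j + exp (-(α * 2 ^ (α - 1) * (j : ℝ) ^ α))) :=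
        (summable_exp_neg_add_rpow hα0 (by linarith)).tsum_le_tsum
          (exp_neg_add_rpow_le hα0.le hα1 (by linarith)) ((hgeom.add hS).mul_left _)
    _ = exp (-x ^ α) * ((1 - exp (-c))⁻¹ + ∑' n : ℕ, exp (-(α * 2 ^ (α - 1) * (n : ℝ) ^ α))) := by
        rw [tsum_mul_left, hgeom.tsum_add hS,
          tsum_geometric_of_lt_one (exp_pos _).le (exp_lt_one_iff.2 (by linarith))]
    _ ≤ tailConst α * x ^ (1 - α) * exp (-x ^ α) := by
        have hS0 : 0 ≤ ∑' n : ℕ, exp (-(α * 2 ^ (α - 1) * (n : ℝ) ^ α)) :=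
          tsum_nonneg fun _ => (exp_pos _).le
        rw [mul_comm _ (exp _), tailConst]
        gcongr
        nlinarith [inv_one_sub_exp_neg_le hc]

theorem exp_neg_two_mul_le_tsum_exp_neg_add_rpow (hα0 : 0 < α) (hα1 : α ≤ 1) (hx : 1 ≤ x) :
    exp (-2) * x ^ (1 - α) * exp (-x ^ α) ≤ ∑' j : ℕ, exp (-(x + j) ^ α) := by
  set n := ⌈x ^ (1 - α)⌉₊
  have hx1 : 1 ≤ x ^ (1 - α) := one_le_rpow hx (by linarith)
  have hn : x ^ (1 - α) ≤ n := Nat.le_ceil _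
  have hn2 : (n : ℝ) ≤ 2 * x ^ (1 - α) := by
    have := Nat.ceil_lt_add_one (by linarith : 0 ≤ x ^ (1 - α)); linarith
  have hterm : ∀ j ∈ Finset.range n, exp (-2) * exp (-x ^ α) ≤ exp (-(x + j) ^ α) := by
    intro j hj
    have hjn : (j : ℝ) < n := by exact_mod_cast Finset.mem_range.1 hj
    have htan := rpow_le_rpow_add_mul_rpow_sub_one hα0.le hα1 (by linarith : 0 < x)
      (by positivity : 0 ≤ x + j)
    have hcancel : x ^ (1 - α) * x ^ (α - 1) = 1 := by
      rw [← rpow_add (by linarith)]; simp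
    have : α * (x + j - x) * x ^ (α - 1) ≤ 2 := by
      calc α * (x + j - x) * x ^ (α - 1) ≤ 1 * (2 * x ^ (1 - α)) * x ^ (α - 1) := by
            gcongr <;> linarith
        _ = 2 := by rw [one_mul, mul_assoc, hcancel, mul_one]
    rw [← exp_add, exp_le_exp]
    linarith
  calc exp (-2) * x ^ (1 - α) * exp (-x ^ α)
      ≤ n * (exp (-2) * exp (-x ^ α)) := by rw [mul_right_comm, mul_comm]; gcongr
    _ ≤ ∑ j ∈ Finset.range n, exp (-(x + j) ^ α) := by
        simpa using Finset.card_nsmul_le_sum _ _ _ hterm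
    _ ≤ ∑' j : ℕ, exp (-(x + j) ^ α) :=
        (summable_exp_neg_add_rpow hα0 (by linarith)).sum_le_tsum _ fun j _ => (exp_pos _).le

end TailSum

theorem tail_sum_asymptotics (α : ℝ) (hα : α ∈ Set.Ioo (0 : ℝ) 1) :
    ∃ k : ℝ, 1 ≤ k ∧ ∀ x : ℕ, 1 ≤ x →
      Summable (fun y : {y : ℕ // x ≤ y} => Real.exp (-(y : ℝ) ^ α)) ∧
      (1 / k) * (x : ℝ) ^ (1 - α) * Real.exp (-(x : ℝ) ^ α) ≤
        (∑' y : {y : ℕ // x ≤ y}, Real.exp (-(y : ℝ) ^ α)) ∧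
      (∑' y : {y : ℕ // x ≤ y}, Real.exp (-(y : ℝ) ^ α)) ≤
        k * (x : ℝ) ^ (1 - α) * Real.exp (-(x : ℝ) ^ α) := by
  obtain ⟨hα0, hα1⟩ := hα
  refine ⟨max (exp 2) (tailConst α), le_max_of_le_left (one_le_exp zero_le_two), fun x hx => ?_⟩
  have hx1 : (1 : ℝ) ≤ x := by exact_mod_cast hx
  have hsum : HasSum (fun y : {y : ℕ // x ≤ y} => exp (-(y : ℝ) ^ α))
      (∑' j : ℕ, exp (-((x : ℝ) + j) ^ α)) := by
    refine (Nat.hasSum_subtype_le_iff (f := fun y : ℕ => exp (-(y : ℝ) ^ α))).2 ?_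
    simpa only [Nat.cast_add] using (summable_exp_neg_add_rpow hα0 (by linarith)).hasSum
  have hk : 1 / max (exp 2) (tailConst α) ≤ exp (-2) := by
    rw [exp_neg, one_div]
    exact inv_anti₀ (exp_pos 2) (le_max_left _ _)
  rw [hsum.tsum_eq]
  refine ⟨hsum.summable, le_trans ?_ (exp_neg_two_mul_le_tsum_exp_neg_add_rpow hα0 hα1.le hx1),
    (tsum_exp_neg_add_rpow_le hα0 hα1.le hx1).trans ?_⟩
  · gcongr
  · gcongr
    exact le_max_right _ _
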